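/- Let W : Fin d → Fin d → ℝ have all entries in [0,1], let μ = Bern(W), fix nodes x, u, y ∈ Fin d and l ≥ 0, and define f, g : (Fin d → Fin d → Bool) → ℝ by f(A) = 1 if there is no directed path from x to u in A of length at most l and f(A) = 0 otherwise, and g(A) = 1 if A u y = false and g(A) = 0 otherwise. Then ∫ f·g dμ ≥ (∫ f dμ) · (∫ g dμ); that is, bounded-length unreachability and the absence of an edge are nonnegatively correlated under the product Bernoulli measure. -/

import Mathlib

open MeasureTheory
open scoped ENNReal

noncomputable section

/-- A directed path from `x` to `y` of length `k` in the directed graph `A`. -/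
def HasPath {d : ℕ} (A : Fin d → Fin d → Bool) (x y : Fin d) (k : ℕ) : Prop :=
  ∃ v : ℕ → Fin d, v 0 = x ∧ v k = y ∧ ∀ i < k, A (v i) (v (i + 1)) = true

/-- Bernoulli measure on `Bool` with parameter `p`. -/
def bernoulliMeasure (p : ℝ) : Measure Bool :=
  ENNReal.ofReal p • Measure.dirac true + ENNReal.ofReal (1 - p) • Measure.dirac false

instance (p : ℝ) : IsFiniteMeasure (bernoulliMeasure p) := by
  constructor
  have h : bernoulliMeasure p Set.univ = ENNReal.ofReal p + ENNReal.ofReal (1 - p) := by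
    simp [bernoulliMeasure]
  rw [h]
  exact ENNReal.add_lt_top.2 ⟨ENNReal.ofReal_lt_top, ENNReal.ofReal_lt_top⟩

/-- `Bern(W)`: the product over all pairs `(u, v)` of Bernoulli measures, under which
the coordinates `A u v` are independent with `ℙ(A u v = true) = W u v`. -/
def bernMeasure {d : ℕ} (W : Fin d → Fin d → ℝ) : Measure (Fin d → Fin d → Bool) :=
  Measure.pi fun u => Measure.pi fun v => bernoulliMeasure (W u v)

/-! Whether `u` is reachable from `x` within `l` steps depends only on the rows `A a` with
`a ≠ u`, since a path can be cut at its first visit to `u`; the indicator of `A u y = false`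
depends only on the row `A u`. Under `Bern(W)` the rows are independent, so the two indicators
are independent and the correlation inequality even holds with equality. -/

theorem isProbabilityMeasure_bernoulliMeasure {p : ℝ} (hp : p ∈ Set.Icc (0 : ℝ) 1) :
    IsProbabilityMeasure (bernoulliMeasure p) := by
  constructor
  simp [bernoulliMeasure, ← ENNReal.ofReal_add hp.1 (sub_nonneg.2 hp.2)]

open ProbabilityTheory in
theorem integral_mul_eq_mul_integral_of_dependsOn {ι : Type*} [Fintype ι] {Ω : ι → Type*}
    [∀ i, MeasurableSpace (Ω i)] [∀ i, Countable (Ω i)] [∀ i, MeasurableSingletonClass (Ω i)]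
    (μ : ∀ i, Measure (Ω i)) [∀ i, IsProbabilityMeasure (μ i)] {f g : (Π i, Ω i) → ℝ}
    {S T : Finset ι} (hST : Disjoint S T) (hf : DependsOn f S) (hg : DependsOn g T) :
    ∫ ω, f ω * g ω ∂Measure.pi μ = (∫ ω, f ω ∂Measure.pi μ) * ∫ ω, g ω ∂Measure.pi μ := by
  have hind : IndepFun (fun ω (i : S) ↦ ω i) (fun ω (i : T) ↦ ω i) (Measure.pi μ) :=
    (iIndepFun_pi (X := fun _ ↦ id) fun _ ↦ aemeasurable_id).indepFun_finset S T hST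
      fun i ↦ measurable_pi_apply i
  obtain ⟨F, rfl⟩ := dependsOn_iff_exists_comp.1 hf
  obtain ⟨G, rfl⟩ := dependsOn_iff_exists_comp.1 hg
  exact (hind.comp (.of_discrete (f := F)) (.of_discrete (f := G))).integral_mul_eq_mul_integral
    (Measurable.of_discrete).aestronglyMeasurable (Measurable.of_discrete).aestronglyMeasurable

theorem exists_hasPath_le_of_forall_ne_eq {d : ℕ} {A B : Fin d → Fin d → Bool} {x u : Fin d}
    {l : ℕ} (hAB : ∀ a ≠ u, A a = B a) (h : ∃ k ≤ l, HasPath A x u k) :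
    ∃ k ≤ l, HasPath B x u k := by
  classical
  obtain ⟨k, hkl, v, hv₀, hvk, hedge⟩ := h
  have hvisit : ∃ j, v j = u := ⟨k, hvk⟩
  have hfirst : Nat.find hvisit ≤ k := Nat.find_min' hvisit hvk
  refine ⟨Nat.find hvisit, hfirst.trans hkl, v, hv₀, Nat.find_spec hvisit, fun i hi ↦ ?_⟩
  rw [← hAB _ (Nat.find_min hvisit hi)]
  exact hedge i (hi.trans_le hfirst)

theorem dependsOn_exists_hasPath_le {d : ℕ} (x u : Fin d) (l : ℕ) :
    DependsOn (fun A : Fin d → Fin d → Bool ↦ ∃ k ≤ l, HasPath A x u k) {u}ᶜ := fun _ _ hAB ↦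
  propext ⟨exists_hasPath_le_of_forall_ne_eq hAB,
    exists_hasPath_le_of_forall_ne_eq fun a ha ↦ (hAB a ha).symm⟩

open Classical in
/-- Bounded-length unreachability and the absence of an edge are nonnegatively
correlated under the product Bernoulli measure: with
`f A = 1` iff there is no directed path from `x` to `u` in `A` of length at most `l`,
and `g A = 1` iff `A u y = false`, one has `∫ f·g dμ ≥ (∫ f dμ)·(∫ g dμ)`. -/
theorem unreach_nonedge_nonneg_correlated {d : ℕ} (W : Fin d → Fin d → ℝ)
    (hW : ∀ u v, W u v ∈ Set.Icc (0 : ℝ) 1) (x u y : Fin d) (l : ℕ)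
    (f g : (Fin d → Fin d → Bool) → ℝ)
    (hf : f = fun A => if ¬ ∃ k ≤ l, HasPath A x u k then 1 else 0)
    (hg : g = fun A => if A u y = false then 1 else 0) :
    (∫ A, f A * g A ∂ bernMeasure W) ≥
      (∫ A, f A ∂ bernMeasure W) * (∫ A, g A ∂ bernMeasure W) := by
  have hprob := fun a b ↦ isProbabilityMeasure_bernoulliMeasure (hW a b)
  have hf_rows : DependsOn f ↑({u}ᶜ : Finset (Fin d)) := fun A B hAB ↦ by
    simp only [hf, dependsOn_exists_hasPath_le x u l (by simpa using hAB)]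
  have hg_row : DependsOn g ↑({u} : Finset (Fin d)) := fun A B hAB ↦ by
    simp only [hg, hAB u (by simp)]
  exact (integral_mul_eq_mul_integral_of_dependsOn _ disjoint_compl_left hf_rows hg_row).ge

end
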